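/- arXiv:1406.3973 — 3 statements merged into one kernel-verified Lean document; each statement's English description precedes it below -/
import Mathlib

section
/- Let A be a graded Hopf algebra over ℤ with a bilinear inner product ⟨·,·⟩ such that multiplication m and comultiplication Δ are adjoint, i.e. ⟨m(x⊗y),z⟩ = ⟨x⊗y, Δ(z)⟩ for all x,y,z (with the induced product form on A⊗A). For x ∈ A define operators m_x(z) = x·z and Δ_x to be the adjoint of m_x, so ⟨Δ_x(z),u⟩ = ⟨z, x·u⟩. Then for all x, y, z ∈ A, writing Δ(x) = Σ x₍₁₎ ⊗ x₍₂₎ in Sweedler notation, the Heisenberg relation holds: Δ_x(m_y(z)) = Σ m_{Δ_{x₍₁₎}(y)}(Δ_{x₍₂₎}(z)). -/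
open TensorProduct

/-- **The Heisenberg relation in a self-adjoint Hopf algebra.**
`A` is a commutative (and, being a bialgebra with adjoint structure maps, cocommutative)
Hopf algebra over `R` with a bilinear form `B` such that multiplication and comultiplication
are adjoint: `⟨m(x⊗y), z⟩ = ⟨x⊗y, Δ z⟩` (where the form on `A ⊗ A` is the product form
`B.tmul B`).  `D x` is the adjoint `Δ_x` of left multiplication `m_x` by `x`, assumed to
separate points via the form.  Then `Δ_x (m_y z) = Σ m_{Δ_{x₍₁₎} y} (Δ_{x₍₂₎} z)`, where the
Sweedler sum over `Δ(x) = Σ x₍₁₎ ⊗ x₍₂₎` is expressed by applying the linear map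
`mul' ∘ (D(-) y ⊗ D(-) z)` to `comul x`. -/
theorem heisenberg_relation_selfadjoint_hopf
    {R A : Type*} [CommRing R] [CommRing A] [Bialgebra R A]
    (B : LinearMap.BilinForm R A)
    (hsep : ∀ z w : A, (∀ u : A, B z u = B w u) → z = w)
    (hadj : ∀ x y z : A,
      B (x * y) z = B.tmul B (x ⊗ₜ[R] y) (Coalgebra.comul (R := R) z))
    (D : A →ₗ[R] A →ₗ[R] A)
    (hD : ∀ x z u : A, B (D x z) u = B z (x * u))
    (x y z : A) :
    D x (y * z) =
      (LinearMap.mul' R A ∘ₗ TensorProduct.map (D.flip y) (D.flip z))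
        (Coalgebra.comul (R := R) x) := by
  apply hsep
  intro u
  have key : ∀ t : A ⊗[R] A,
      B ((LinearMap.mul' R A ∘ₗ TensorProduct.map (D.flip y) (D.flip z)) t) u
        = B.tmul B (y ⊗ₜ[R] z) (t * Coalgebra.comul (R := R) u) := by
    intro t
    induction t using TensorProduct.induction_on with
    | zero => simp
    | tmul x1 x2 =>
      simp only [LinearMap.comp_apply, TensorProduct.map_tmul,
        LinearMap.mul'_apply, LinearMap.flip_apply]
      rw [hadj]
      have key2 : ∀ s : A ⊗[R] A,
          B.tmul B ((D x1 y) ⊗ₜ[R] (D x2 z)) s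
            = B.tmul B (y ⊗ₜ[R] z) ((x1 ⊗ₜ[R] x2) * s) := by
        intro s
        induction s using TensorProduct.induction_on with
        | zero => simp
        | tmul u1 u2 =>
          rw [Algebra.TensorProduct.tmul_mul_tmul]
          simp only [LinearMap.BilinForm.tmul, LinearMap.BilinMap.tmul,
            LinearMap.BilinForm.tensorDistrib_tmul]
          rw [hD, hD]
        | add s1 s2 h1 h2 => rw [mul_add, map_add, map_add, h1, h2]
      exact key2 _
    | add t1 t2 h1 h2 =>
      rw [map_add, map_add, add_mul, map_add, LinearMap.add_apply, h1, h2]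
  rw [key, ← Bialgebra.comul_mul, hD, hadj]
end

section
/- Let A = ⊕_{n≥0} A_n be a graded self-adjoint Hopf algebra over ℤ with A_0 ≅ ℤ (connected), each A_n free of finite rank with an orthogonal basis, and with the form positive definite on each graded piece. Then the map φ : A ⊗ A → End_ℤ(A) given by φ(x ⊗ y) = m_x ∘ Δ_y is injective, where m_x is multiplication by x and Δ_y is its graded adjoint. -/
open TensorProduct DirectSum

/-! Expand `t ∈ A ⊗ A` as `∑ⱼ fⱼ ⊗ cⱼ` over a homogeneous orthogonal basis `c` of `A`. The
operator `φ t` sends `cᵢ` to `∑ⱼ fⱼ · Δ_{cⱼ} cᵢ`. Pairing against `A` shows that `Δ_{cⱼ} cᵢ = 0`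
when `deg cᵢ < deg cⱼ`, and `⟨1, 1⟩ · Δ_{cⱼ} cᵢ = ⟨cᵢ, cⱼ⟩ · 1` when the degrees agree, because
`A₀ = ℤ · 1`. So the matrix `(⟨1, 1⟩ · Δ_{cⱼ} cᵢ)` is triangular with respect to the degree, with
diagonal entries `⟨cᵢ, cᵢ⟩ · 1` that are not zero divisors (positivity makes `A` torsion-free),
and the coefficient `fᵢ` of minimal degree in the support of `f` would have to vanish. -/

theorem Finsupp.eq_zero_of_sum_mul_triangular {ι R β : Type*} [Semiring R] [LinearOrder β]
    (deg : ι → β) {g : ι → ι → R} (hg : ∀ i j, i ≠ j → deg i ≤ deg j → g j i = 0)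
    (hdiag : ∀ i, g i i ∈ nonZeroDivisorsRight R) {f : ι →₀ R}
    (hf : ∀ i, (f.sum fun j r => r * g j i) = 0) : f = 0 := by
  classical
  by_contra hne
  obtain ⟨i, hi, hmin⟩ := f.support.exists_min_image deg (Finsupp.support_nonempty_iff.mpr hne)
  have hfi : f i * g i i = 0 := by
    rw [← hf i, Finsupp.sum, Finset.sum_eq_single_of_mem i hi]
    intro j hj hji
    rw [hg i j (Ne.symm hji) (hmin j hj), mul_zero]
  exact Finsupp.mem_support_iff.mp hi (hdiag i _ hfi)

theorem DirectSum.Decomposition.exists_basis_sigma_of_span {ι R M : Type*} [DecidableEq ι]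
    [Ring R] [AddCommGroup M] [Module R M] (𝒜 : ι → Submodule R M) [Decomposition 𝒜]
    (s : ι → Set M) (hspan : ∀ i, Submodule.span R (s i) = 𝒜 i)
    (hli : ∀ i, LinearIndependent R (fun x : s i => (x : M))) :
    ∃ c : Module.Basis (Σ i, s i) R M, ∀ j, c j = j.2 := by
  let v i : Module.Basis (s i) R (𝒜 i) := (Module.Basis.span (hli i)).map
    (LinearEquiv.ofEq _ _ (by rw [Subtype.range_coe, hspan i]))
  refine ⟨(Decomposition.isInternal 𝒜).collectedBasis v, fun j => ?_⟩
  simp [v, IsInternal.collectedBasis_coe]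

theorem LinearMap.SeparatingLeft.eq_zero_of_smul_eq_zero {R M : Type*} [CommRing R]
    [NoZeroDivisors R] [AddCommGroup M] [Module R M] {B : LinearMap.BilinForm R M}
    (hB : B.SeparatingLeft) {r : R} (hr : r ≠ 0) {x : M} (h : r • x = 0) : x = 0 :=
  hB x fun u => by simpa [hr] using congr(B $h u)

theorem TensorProduct.lift_mul_compl₁₂_lmul_sum_tmul_apply {R A ι : Type*} [CommSemiring R]
    [Semiring A] [Algebra R A] (D : A →ₗ[R] A →ₗ[R] A) (c : ι → A) (f : ι →₀ A) (z : A) :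
    lift ((LinearMap.mul R (Module.End R A)).compl₁₂ (Algebra.lmul R A).toLinearMap D)
      (f.sum fun j x => x ⊗ₜ c j) z = f.sum fun j x => x * D (c j) z := by
  simp [Finsupp.sum]

section GradedPairing

variable {R A : Type*} [CommRing R] [Ring A] [Algebra R A] {𝒜 : ℕ → Submodule R A}
  [GradedRing 𝒜] {B : LinearMap.BilinForm R A}

theorem LinearMap.BilinForm.apply_decompose_of_mem
    (horth : ∀ {m n : ℕ}, m ≠ n → ∀ x ∈ 𝒜 m, ∀ y ∈ 𝒜 n, B x y = 0)
    {m : ℕ} {z : A} (hz : z ∈ 𝒜 m) (u : A) : B z (decompose 𝒜 u m) = B z u := by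
  classical
  conv_rhs => rw [← sum_support_decompose 𝒜 u]
  rw [map_sum, Finset.sum_eq_single m
    (fun k _ hk => horth (Ne.symm hk) z hz _ (SetLike.coe_mem _))]
  intro hm
  rw [DFinsupp.notMem_support_iff.mp hm, ZeroMemClass.coe_zero, map_zero]

variable {D : A → A → A}

theorem LinearMap.BilinForm.adjoint_mul_apply_eq_zero_of_lt
    (horth : ∀ {m n : ℕ}, m ≠ n → ∀ x ∈ 𝒜 m, ∀ y ∈ 𝒜 n, B x y = 0)
    (hB : B.SeparatingLeft) (hD : ∀ x z u, B (D x z) u = B z (x * u))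
    {m n : ℕ} {b z : A} (hb : b ∈ 𝒜 n) (hz : z ∈ 𝒜 m) (hmn : m < n) : D b z = 0 :=
  hB _ fun u => by
    rw [hD, ← B.apply_decompose_of_mem horth hz,
      coe_decompose_mul_of_left_mem_of_not_le 𝒜 hb (by omega), map_zero]

theorem LinearMap.BilinForm.smul_adjoint_mul_apply_of_mem
    (horth : ∀ {m n : ℕ}, m ≠ n → ∀ x ∈ 𝒜 m, ∀ y ∈ 𝒜 n, B x y = 0)
    (hconn : ∀ x ∈ 𝒜 0, ∃ r : R, x = r • (1 : A))
    (hB : B.SeparatingLeft) (hD : ∀ x z u, B (D x z) u = B z (x * u))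
    {m : ℕ} {b z : A} (hb : b ∈ 𝒜 m) (hz : z ∈ 𝒜 m) : B 1 1 • D b z = B z b • (1 : A) := by
  refine sub_eq_zero.mp (hB _ fun u => ?_)
  obtain ⟨r, hr⟩ := hconn _ (decompose 𝒜 u 0).2
  have hzbu : B z (b * u) = r * B z b := by
    rw [← B.apply_decompose_of_mem horth hz, coe_decompose_mul_of_left_mem_of_le 𝒜 hb le_rfl,
      Nat.sub_self, hr, mul_smul_comm, mul_one, map_smul, smul_eq_mul]
  have h1u : B 1 u = r * B 1 1 := by
    rw [← B.apply_decompose_of_mem horth (SetLike.one_mem_graded 𝒜), hr, map_smul, smul_eq_mul]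
  simp only [map_sub, map_smul, LinearMap.sub_apply, LinearMap.smul_apply, smul_eq_mul, hD,
    hzbu, h1u]
  ring

end GradedPairing

theorem psh_heisenberg_action_injective_general
    {A : Type*} [CommRing A]
    (𝒜 : ℕ → Submodule ℤ A) [GradedRing 𝒜]
    -- connectedness : the degree-zero part is spanned by the unit
    (hconn : ∀ x ∈ 𝒜 0, ∃ n : ℤ, x = n • (1 : A))
    (B : LinearMap.BilinForm ℤ A)
    -- each grade has a finite orthogonal basis
    (hbasis : ∀ n : ℕ, ∃ s : Finset A, (↑s : Set A) ⊆ (𝒜 n : Set A) ∧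
      Submodule.span ℤ (↑s : Set A) = 𝒜 n ∧
      (∀ x y : A, x ∈ s → y ∈ s → x ≠ y → B x y = 0) ∧
      LinearIndependent ℤ (fun x : { a // a ∈ s } => (x : A)))
    -- distinct grades are orthogonal
    (horth : ∀ {m n : ℕ}, m ≠ n → ∀ x ∈ 𝒜 m, ∀ y ∈ 𝒜 n, B x y = 0)
    -- positivity of the form
    (hpos : ∀ x : A, x ≠ 0 → 0 < B x x)
    (D : A →ₗ[ℤ] A →ₗ[ℤ] A)
    (hD : ∀ x z u : A, B (D x z) u = B z (x * u)) :
    Function.Injective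
      (TensorProduct.lift
        ((LinearMap.mul ℤ (Module.End ℤ A)).compl₁₂
          (Algebra.lmul ℤ A).toLinearMap D)) := by
  have hB : B.SeparatingLeft := fun x hx => by_contra fun hx0 => (hpos x hx0).ne' (hx x)
  choose s hsub hspan hsorth hli using hbasis
  obtain ⟨c, hc⟩ := Decomposition.exists_basis_sigma_of_span 𝒜 (fun n => ↑(s n)) hspan hli
  rw [injective_iff_map_eq_zero]
  intro t ht
  obtain ⟨f, rfl⟩ := TensorProduct.eq_repr_basis_right c t
  suffices f = 0 by simp [this]
  refine Finsupp.eq_zero_of_sum_mul_triangular Sigma.fst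
    (g := fun j i => B 1 1 • D (c j) (c i)) ?_ ?_ fun i => ?_
  · rintro ⟨m, z⟩ ⟨n, b⟩ hne (hle : m ≤ n)
    simp only [hc]
    rcases hle.lt_or_eq with hlt | rfl
    · rw [B.adjoint_mul_apply_eq_zero_of_lt horth hB hD (hsub n b.2) (hsub m z.2) hlt, smul_zero]
    · rw [B.smul_adjoint_mul_apply_of_mem horth hconn hB hD (hsub m b.2) (hsub m z.2),
        hsorth m z b z.2 b.2 fun h => hne (by rw [Subtype.ext h]), zero_smul]
  · rintro ⟨n, b⟩ y hy
    have hb0 : (b : A) ≠ 0 := hc ⟨n, b⟩ ▸ c.ne_zero ⟨n, b⟩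
    simp only [hc] at hy
    rw [B.smul_adjoint_mul_apply_of_mem horth hconn hB hD (hsub n b.2) (hsub n b.2),
      mul_smul_comm, mul_one] at hy
    exact hB.eq_zero_of_smul_eq_zero (hpos b hb0).ne' hy
  · have hti := congr($ht (c i))
    rw [lift_mul_compl₁₂_lmul_sum_tmul_apply, LinearMap.zero_apply] at hti
    simp only [mul_smul_comm, ← Finsupp.smul_sum, hti, smul_zero]

/-- **Injectivity of the Heisenberg-double action map for a PSH algebra.**
`A = ⊕ₙ Aₙ` is a graded connected self-adjoint Hopf algebra over `ℤ` (grading `𝒜` with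
`𝒜 0 = ℤ·1`), each graded piece is spanned by a finite orthogonal basis, the bilinear form
`B` is positive definite, pairs distinct graded pieces to zero, and makes multiplication
and comultiplication adjoint; `D x = Δ_x` is the adjoint of multiplication by `x`.  Then
the map `φ : A ⊗ A → End_ℤ(A)`, `φ(x ⊗ y) = m_x ∘ Δ_y`, is injective. -/
theorem psh_heisenberg_action_injective
    {A : Type*} [CommRing A]
    (𝒜 : ℕ → Submodule ℤ A) [GradedRing 𝒜]
    -- the comultiplication, an algebra homomorphism (the Hopf axiom)
    (comul : A →ₗ[ℤ] A ⊗[ℤ] A)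
    (hcomul_mul : ∀ x y : A, comul (x * y) = comul x * comul y)
    (hcomul_one : comul 1 = 1)
    -- connectedness : the degree-zero part is spanned by the unit
    (hconn : ∀ x ∈ 𝒜 0, ∃ n : ℤ, x = n • (1 : A))
    (B : LinearMap.BilinForm ℤ A)
    -- each grade has a finite orthogonal basis
    (hbasis : ∀ n : ℕ, ∃ s : Finset A, (↑s : Set A) ⊆ (𝒜 n : Set A) ∧
      Submodule.span ℤ (↑s : Set A) = 𝒜 n ∧
      (∀ x y : A, x ∈ s → y ∈ s → x ≠ y → B x y = 0) ∧
      LinearIndependent ℤ (fun x : { a // a ∈ s } => (x : A)))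
    -- distinct grades are orthogonal
    (horth : ∀ {m n : ℕ}, m ≠ n → ∀ x ∈ 𝒜 m, ∀ y ∈ 𝒜 n, B x y = 0)
    -- positivity of the form
    (hpos : ∀ x : A, x ≠ 0 → 0 < B x x)
    -- multiplication and comultiplication are adjoint
    (hadj : ∀ x y z : A, B (x * y) z = B.tmul B (x ⊗ₜ[ℤ] y) (comul z))
    (D : A →ₗ[ℤ] A →ₗ[ℤ] A)
    (hD : ∀ x z u : A, B (D x z) u = B z (x * u)) :
    Function.Injective
      (TensorProduct.lift
        ((LinearMap.mul ℤ (Module.End ℤ A)).compl₁₂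
          (Algebra.lmul ℤ A).toLinearMap D)) :=
  psh_heisenberg_action_injective_general 𝒜 hconn B hbasis horth hpos D hD
end

section
/- Let A be a self-adjoint Hopf algebra satisfying the Heisenberg relation Δ_x ∘ m_y = Σ m_{Δ_{x₍₂₎}(y)} ∘ Δ_{x₍₁₎} for all x, y. Then the image of the map φ : A ⊗ A → End(A), φ(x⊗y) = m_x ∘ Δ_y, is closed under composition, i.e. is a subalgebra of End(A) (containing the identity φ(1⊗1)). -/
/-!
Moving `Δ_y` past `m_z` with the Heisenberg relation `Δ_y m_z = Σ m_{Δ_{y₍₂₎} z} Δ_{y₍₁₎}`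
and then merging `m_x m_{x'} = m_{x x'}` and `Δ_a Δ_w = Δ_{w a}` writes a product
`(m_x Δ_y)(m_z Δ_w)` as a sum of operators `m_{x'} Δ_{w'}`. Since the image of `φ` is spanned by
the `m_x Δ_y`, this makes it closed under composition, and `φ(1 ⊗ 1) = id`.
-/

open TensorProduct

namespace Heisenberg

theorem mul_mem_range_of_tmul {R M N S : Type*} [CommSemiring R] [AddCommMonoid M] [Module R M]
    [AddCommMonoid N] [Module R N] [NonUnitalNonAssocSemiring S] [Module R S]
    (f : M ⊗[R] N →ₗ[R] S)
    (h : ∀ x y z w, f (x ⊗ₜ y) * f (z ⊗ₜ w) ∈ LinearMap.range f) :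
    ∀ u v, u ∈ LinearMap.range f → v ∈ LinearMap.range f → u * v ∈ LinearMap.range f := by
  rintro _ _ ⟨s, rfl⟩ ⟨t, rfl⟩
  induction s using TensorProduct.induction_on with
  | zero => simp
  | add s₁ s₂ h₁ h₂ => simpa only [map_add, add_mul] using Submodule.add_mem _ h₁ h₂
  | tmul x y =>
    induction t using TensorProduct.induction_on with
    | zero => simp
    | add t₁ t₂ h₁ h₂ => simpa only [map_add, mul_add] using Submodule.add_mem _ h₁ h₂
    | tmul z w => exact h x y z w

variable {R A : Type*} [CommSemiring R] [Semiring A] [Algebra R A]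

noncomputable def heisenbergMap (D : A →ₗ[R] A →ₗ[R] A) : A ⊗[R] A →ₗ[R] Module.End R A :=
  lift ((LinearMap.mul R (Module.End R A)).compl₁₂ (Algebra.lmul R A).toLinearMap D)

variable {D : A →ₗ[R] A →ₗ[R] A}

@[simp]
theorem heisenbergMap_tmul (x y : A) :
    heisenbergMap D (x ⊗ₜ y) = Algebra.lmul R A x * D y := by
  simp [heisenbergMap]

theorem one_mem_range_heisenbergMap (hD1 : D 1 = LinearMap.id) :
    1 ∈ LinearMap.range (heisenbergMap D) :=
  ⟨1 ⊗ₜ 1, by rw [heisenbergMap_tmul, hD1, map_one]; rfl⟩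

/-- `m_x ∘ (Σ m_{Δ_{c₍₂₎} z} Δ_{c₍₁₎}) ∘ Δ_w = Σ m_{x Δ_{c₍₂₎} z} Δ_{w c₍₁₎}`. -/
theorem lmul_mul_lift_mul_eq_heisenbergMap (hDmul : ∀ x y : A, D x ∘ₗ D y = D (y * x))
    (x z w : A) (c : A ⊗[R] A) :
    Algebra.lmul R A x *
        (lift ((LinearMap.mul R (Module.End R A)).flip.compl₁₂ D
          ((Algebra.lmul R A).toLinearMap ∘ₗ D.flip z)) c * D w) =
      heisenbergMap D (map (LinearMap.mulLeft R x ∘ₗ D.flip z) (LinearMap.mulLeft R w)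
        (TensorProduct.comm R A A c)) := by
  induction c using TensorProduct.induction_on with
  | zero => simp
  | add c₁ c₂ h₁ h₂ => simp only [map_add, add_mul, mul_add, h₁, h₂]
  | tmul a b =>
    have hDa : D a * D w = D (w * a) := hDmul a w
    simp only [lift.tmul, LinearMap.compl₁₂_apply, LinearMap.flip_apply, LinearMap.mul_apply',
      LinearMap.comp_apply, TensorProduct.comm_tmul, map_tmul, LinearMap.mulLeft_apply,
      heisenbergMap_tmul, map_mul, AlgHom.toLinearMap_apply]
    rw [mul_assoc, mul_assoc, hDa, ← mul_assoc]

theorem heisenbergMap_tmul_mul_tmul [CoalgebraStruct R A]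
    (hDmul : ∀ x y : A, D x ∘ₗ D y = D (y * x))
    (heis : ∀ x y : A,
      D x ∘ₗ (Algebra.lmul R A).toLinearMap y =
        lift ((LinearMap.mul R (Module.End R A)).flip.compl₁₂ D
          ((Algebra.lmul R A).toLinearMap ∘ₗ D.flip y)) (Coalgebra.comul (R := R) x))
    (x y z w : A) :
    heisenbergMap D (x ⊗ₜ y) * heisenbergMap D (z ⊗ₜ w) =
      heisenbergMap D (map (LinearMap.mulLeft R x ∘ₗ D.flip z) (LinearMap.mulLeft R w)
        (TensorProduct.comm R A A (Coalgebra.comul y))) := by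
  have hyz : D y * Algebra.lmul R A z = _ := heis y z
  rw [heisenbergMap_tmul, heisenbergMap_tmul, mul_assoc, ← mul_assoc (D y), hyz,
    lmul_mul_lift_mul_eq_heisenbergMap hDmul]

end Heisenberg

open Heisenberg in
/-- **The image of `φ(x⊗y) = m_x ∘ Δ_y` is a subalgebra of `End(A)`.**
`A` is a commutative (co)commutative self-adjoint Hopf algebra; `D x = Δ_x` is the
adjoint of multiplication by `x`, satisfying `Δ_1 = id`, the comultiplicativity relation
`Δ_x ∘ Δ_y = Δ_{y·x}`, and the Heisenberg relation
`Δ_x ∘ m_y = Σ m_{Δ_{x₍₂₎} y} ∘ Δ_{x₍₁₎}` (the Sweedler sum being expressed by applying a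
bilinear map to `comul x`).  Then the range of `φ : A ⊗ A → End(A)`,
`φ(x ⊗ y) = m_x ∘ Δ_y`, contains the identity and is closed under composition. -/
theorem heisenberg_image_is_subalgebra
    {R A : Type*} [CommRing R] [CommRing A] [Bialgebra R A]
    (D : A →ₗ[R] A →ₗ[R] A)
    (hD1 : D 1 = LinearMap.id)
    (hDmul : ∀ x y : A, (D x) ∘ₗ (D y) = D (y * x))
    (heis : ∀ x y : A,
      (D x) ∘ₗ ((Algebra.lmul R A).toLinearMap y) =
        TensorProduct.lift
          ((LinearMap.mul R (Module.End R A)).flip.compl₁₂ D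
            ((Algebra.lmul R A).toLinearMap ∘ₗ D.flip y))
          (Coalgebra.comul (R := R) x)) :
    (1 : Module.End R A) ∈
      LinearMap.range (TensorProduct.lift
        ((LinearMap.mul R (Module.End R A)).compl₁₂ (Algebra.lmul R A).toLinearMap D)) ∧
    ∀ u v : Module.End R A,
      u ∈ LinearMap.range (TensorProduct.lift
        ((LinearMap.mul R (Module.End R A)).compl₁₂ (Algebra.lmul R A).toLinearMap D)) →
      v ∈ LinearMap.range (TensorProduct.lift
        ((LinearMap.mul R (Module.End R A)).compl₁₂ (Algebra.lmul R A).toLinearMap D)) →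
      u * v ∈ LinearMap.range (TensorProduct.lift
        ((LinearMap.mul R (Module.End R A)).compl₁₂ (Algebra.lmul R A).toLinearMap D)) :=
  ⟨one_mem_range_heisenbergMap hD1,
    mul_mem_range_of_tmul (heisenbergMap D) fun x y z w =>
      ⟨_, (heisenbergMap_tmul_mul_tmul hDmul heis x y z w).symm⟩⟩
end
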